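/- Let (M_n)_{n ∈ ℕ} be an inverse system of modules over a ring R in which every transition map M_{n+1} → M_n is surjective and each M_n is a free module of rank r over R/(t^{n+1}) for a fixed element t ∈ R (with compatible structure maps). If R is t-adically complete, then the inverse limit lim← M_n is a free module of rank r over R. -/
import Mathlib


/-- The inverse limit of an inverse system of modules, realized as a submodule of
the product. -/
def invLimit {R : Type*} [CommRing R] (M : ℕ → Type*)
    [∀ n, AddCommGroup (M n)] [∀ n, Module R (M n)]
    (f : ∀ n, M (n + 1) →ₗ[R] M n) : Submodule R (∀ n, M n) where
  carrier := {x | ∀ n, f n (x (n + 1)) = x n}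
  add_mem' {x y} hx hy := fun n => by simp [map_add, hx n, hy n]
  zero_mem' := fun n => by simp
  smul_mem' c x hx := fun n => by simp [map_smul, hx n]

open Function LinearMap Submodule

section Aux
variable {R : Type*} [CommRing R]

/-- A surjection onto a finite module whose kernel contains the kernel of another
surjection onto an isomorphic module has exactly that kernel. -/
lemma ker_le_ker_of_surj {X Y Z : Type*} [AddCommGroup X] [AddCommGroup Y] [AddCommGroup Z]
    [Module R X] [Module R Y] [Module R Z] [Module.Finite R Y]
    (ρ : X →ₗ[R] Y) (θ : X →ₗ[R] Z) (hρ : Surjective ρ) (hθ : Surjective θ)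
    (h : ker ρ ≤ ker θ) (e : Z ≃ₗ[R] Y) : ker θ ≤ ker ρ := by
  let q : (X ⧸ ker ρ) ≃ₗ[R] Y := ρ.quotKerEquivOfSurjective hρ
  haveI : Module.Finite R (X ⧸ ker ρ) := Module.Finite.equiv q.symm
  let L : (X ⧸ ker ρ) →ₗ[R] Z := Submodule.liftQ (ker ρ) θ h
  have hL : ∀ x : X, L (Submodule.Quotient.mk x) = θ x := fun x => rfl
  have hLs : Surjective L := by
    intro z; obtain ⟨x, rfl⟩ := hθ z
    exact ⟨Submodule.Quotient.mk x, hL x⟩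
  have hsurj : Surjective (e.toLinearMap ∘ₗ L ∘ₗ q.symm.toLinearMap) := by
    simp only [LinearMap.coe_comp, LinearEquiv.coe_coe]
    exact e.surjective.comp (hLs.comp q.symm.surjective)
  have hinj := OrzechProperty.injective_of_surjective_endomorphism _ hsurj
  intro x hx
  have h1 : (e.toLinearMap ∘ₗ L ∘ₗ q.symm.toLinearMap) (ρ x)
      = (e.toLinearMap ∘ₗ L ∘ₗ q.symm.toLinearMap) (ρ 0) := by
    simp only [LinearMap.coe_comp, LinearEquiv.coe_coe, Function.comp_apply]
    have hq : ∀ y : X, q.symm (ρ y) = Submodule.Quotient.mk y := by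
      intro y
      rw [LinearEquiv.symm_apply_eq]
      rfl
    rw [hq, hq, hL, hL, LinearMap.mem_ker.mp hx]
    simp
  have := hinj h1
  simpa [LinearMap.mem_ker] using this
end Aux

section Main
variable {R : Type*} [CommRing R]

/-- linear combination map -/
def toL {r : ℕ} {M : Type*} [AddCommGroup M] [Module R M] (s : Fin r → M) :
    (Fin r → R) →ₗ[R] M where
  toFun c := ∑ i, c i • s i
  map_add' x y := by simp [add_smul, Finset.sum_add_distrib]
  map_smul' a x := by simp [mul_smul, Finset.smul_sum]

lemma toL_apply {r : ℕ} {M : Type*} [AddCommGroup M] [Module R M] (s : Fin r → M)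
    (c : Fin r → R) : toL s c = ∑ i, c i • s i := rfl

lemma map_toL {r : ℕ} {M N : Type*} [AddCommGroup M] [Module R M] [AddCommGroup N]
    [Module R N] (g : M →ₗ[R] N) (s : Fin r → M) (c : Fin r → R) :
    g (toL s c) = toL (fun i => g (s i)) c := by
  simp [toL_apply, map_sum, map_smul]

variable (t : R)

/-- quotient reduction map -/
def rho (r n : ℕ) : (Fin r → R) →ₗ[R] (Fin r → R ⧸ Ideal.span {t ^ (n + 1)}) :=
  LinearMap.pi fun i => (Ideal.span {t ^ (n + 1)}).mkQ ∘ₗ LinearMap.proj i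

lemma rho_apply (r n : ℕ) (c : Fin r → R) (i : Fin r) :
    rho t r n c i = Submodule.Quotient.mk (c i) := rfl

lemma rho_surjective (r n : ℕ) : Surjective (rho t r n) := by
  intro y
  choose x hx using fun i => Submodule.Quotient.mk_surjective _ (y i)
  exact ⟨x, funext hx⟩

lemma mem_ker_rho {r n : ℕ} {c : Fin r → R} :
    c ∈ ker (rho t r n) ↔ ∀ i, c i ∈ Ideal.span {t ^ (n + 1)} := by
  simp only [LinearMap.mem_ker, funext_iff, rho_apply]
  simp [Submodule.Quotient.mk_eq_zero, Ideal.Quotient.eq_zero_iff_mem]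

lemma quot_smul_zero (n : ℕ) (y : R ⧸ Ideal.span {t ^ (n + 1)}) : t ^ (n + 1) • y = 0 := by
  obtain ⟨x, rfl⟩ := Submodule.Quotient.mk_surjective _ y
  rw [← Submodule.Quotient.mk_smul, Submodule.Quotient.mk_eq_zero]
  exact Ideal.mem_span_singleton'.mpr ⟨x, mul_comm _ _⟩

lemma ann_of_equiv {r n : ℕ} {M : Type*} [AddCommGroup M] [Module R M]
    (e : M ≃ₗ[R] (Fin r → R ⧸ Ideal.span {t ^ (n + 1)})) (m : M) : t ^ (n + 1) • m = 0 := by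
  apply e.injective
  rw [map_smul, map_zero]
  funext i
  exact quot_smul_zero t n (e m i)

lemma toL_zero_of_mem {r n : ℕ} {M : Type*} [AddCommGroup M] [Module R M]
    (e : M ≃ₗ[R] (Fin r → R ⧸ Ideal.span {t ^ (n + 1)})) (s : Fin r → M) (c : Fin r → R)
    (h : ∀ i, c i ∈ Ideal.span {t ^ (n + 1)}) : toL s c = 0 := by
  rw [toL_apply]
  apply Finset.sum_eq_zero
  intro i _
  obtain ⟨a, ha⟩ := Ideal.mem_span_singleton'.mp (h i)
  rw [← ha, mul_smul, ann_of_equiv t e, smul_zero]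


lemma finiteQ (r n : ℕ) : Module.Finite R (Fin r → R ⧸ Ideal.span {t ^ (n + 1)}) :=
  Module.Finite.of_surjective (rho t r n) (rho_surjective t r n)

lemma toL_single {r n : ℕ} {M : Type*} [AddCommGroup M] [Module R M]
    (e : M ≃ₗ[R] (Fin r → R ⧸ Ideal.span {t ^ (n + 1)})) (c : Fin r → R) :
    toL (fun i => e.symm (Pi.single i 1)) c = e.symm (rho t r n c) := by
  rw [toL_apply]
  simp_rw [← map_smul, ← map_sum]
  congr 1
  funext j
  simp only [Finset.sum_apply, Pi.smul_apply, Pi.single_apply, smul_ite, smul_zero]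
  rw [Finset.sum_ite_eq (Finset.univ : Finset (Fin r)) j, if_pos (Finset.mem_univ j)]
  simp only [rho_apply]
  show c j • (1 : R ⧸ Ideal.span {t ^ (n + 1)}) = _
  rw [show (1 : R ⧸ Ideal.span {t ^ (n + 1)}) = Submodule.Quotient.mk 1 from rfl,
    ← Submodule.Quotient.mk_smul, smul_eq_mul, mul_one]

lemma good_base {r n : ℕ} {M : Type*} [AddCommGroup M] [Module R M]
    (e : M ≃ₗ[R] (Fin r → R ⧸ Ideal.span {t ^ (n + 1)})) :
    ∃ s : Fin r → M, Surjective (toL (R := R) s) ∧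
      ∀ c, toL (R := R) s c = 0 → ∀ i, c i ∈ Ideal.span {t ^ (n + 1)} := by
  refine ⟨fun i => e.symm (Pi.single i 1), ?_, ?_⟩
  · intro m
    obtain ⟨c, hc⟩ := rho_surjective t r n (e m)
    exact ⟨c, by rw [toL_single, hc, e.symm_apply_apply]⟩
  · intro c hc
    rw [toL_single] at hc
    have : rho t r n c = 0 := by
      simpa using congrArg e hc
    exact (mem_ker_rho t).mp (LinearMap.mem_ker.mpr this)

lemma good_step {r n : ℕ} {M N : Type*} [AddCommGroup M] [Module R M]
    [AddCommGroup N] [Module R N]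
    (e : M ≃ₗ[R] (Fin r → R ⧸ Ideal.span {t ^ (n + 1)}))
    (eN : N ≃ₗ[R] (Fin r → R ⧸ Ideal.span {t ^ (n + 1 + 1)}))
    (g : N →ₗ[R] M) (hg : Surjective g) (s : Fin r → M)
    (hs1 : Surjective (toL (R := R) s))
    (_hs2 : ∀ c, toL (R := R) s c = 0 → ∀ i, c i ∈ Ideal.span {t ^ (n + 1)}) :
    ∃ s' : Fin r → N, (∀ i, g (s' i) = s i) ∧ Surjective (toL (R := R) s') ∧
      ∀ c, toL (R := R) s' c = 0 → ∀ i, c i ∈ Ideal.span {t ^ (n + 1 + 1)} := by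
  haveI := finiteQ t r n
  haveI := finiteQ t r (n + 1)
  choose s' hs' using fun i => hg (s i)
  have hcomp : ∀ c, g (toL (R := R) s' c) = toL (R := R) s c := by
    intro c
    rw [map_toL, show (fun i => g (s' i)) = s from funext hs']
  -- the reduction map from level n+1 quotients to level n quotients
  have hle : Ideal.span {t ^ (n + 1 + 1)} ≤
      Submodule.comap (LinearMap.id : R →ₗ[R] R) (Ideal.span {t ^ (n + 1)}) := by
    rw [Ideal.span_le]
    intro x hx
    rw [Set.mem_singleton_iff] at hx
    subst hx
    exact Ideal.mem_span_singleton.mpr (pow_dvd_pow t (Nat.le_succ _))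
  set mapQn : (R ⧸ Ideal.span {t ^ (n + 1 + 1)}) →ₗ[R] (R ⧸ Ideal.span {t ^ (n + 1)}) :=
    Submodule.mapQ _ _ LinearMap.id hle with hmapQn
  set ρ' : N →ₗ[R] (Fin r → R ⧸ Ideal.span {t ^ (n + 1)}) :=
    (LinearMap.pi fun i => mapQn ∘ₗ LinearMap.proj i) ∘ₗ eN.toLinearMap with hρ'
  have hρ'apply : ∀ (m : N) (i : Fin r), ρ' m i = mapQn (eN m i) := fun m i => rfl
  have hmapQ_mk : ∀ x : R, mapQn (Submodule.Quotient.mk x) = Submodule.Quotient.mk x := by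
    intro x
    rw [hmapQn, Submodule.mapQ_apply]
    rfl
  have hρ's : Surjective ρ' := by
    intro y
    choose x hx using fun i => Submodule.Quotient.mk_surjective _ (y i)
    refine ⟨eN.symm (fun i => Submodule.Quotient.mk (x i)), funext fun i => ?_⟩
    rw [hρ'apply]
    simp only [LinearEquiv.apply_symm_apply]
    rw [hmapQ_mk, hx]
  -- structure of elements of ker ρ'
  have hkerρ' : ∀ m : N, ρ' m = 0 → ∃ m₀ : N, m = t ^ (n + 1) • m₀ := by
    intro m hm
    have h1 : ∀ i, ∃ a : R, eN m i = Submodule.Quotient.mk (a * t ^ (n + 1)) := by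
      intro i
      obtain ⟨x, hx⟩ := Submodule.Quotient.mk_surjective _ (eN m i)
      have : mapQn (eN m i) = 0 := congrFun hm i
      rw [← hx, hmapQ_mk, Submodule.Quotient.mk_eq_zero] at this
      obtain ⟨a, ha⟩ := Ideal.mem_span_singleton'.mp this
      exact ⟨a, by rw [ha, hx]⟩
    choose a ha using h1
    refine ⟨eN.symm (fun i => Submodule.Quotient.mk (a i)), ?_⟩
    apply eN.injective
    rw [map_smul, LinearEquiv.apply_symm_apply]
    funext i
    rw [ha i, Pi.smul_apply, ← Submodule.Quotient.mk_smul]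
    congr 1
    rw [smul_eq_mul, mul_comm]
  have hkg : ker g ≤ ker ρ' := by
    have := ker_le_ker_of_surj ρ' g hρ's hg ?_ e
    · exact this
    · intro m hm
      rw [LinearMap.mem_ker] at hm ⊢
      obtain ⟨m₀, rfl⟩ := hkerρ' m hm
      rw [map_smul, ann_of_equiv t e]
  -- structure of elements of ker g
  have hkerg : ∀ m : N, g m = 0 → ∃ m₀ : N, m = t ^ (n + 1) • m₀ := by
    intro m hm
    exact hkerρ' m (hkg (LinearMap.mem_ker.mpr hm))
  -- approximate surjectivity
  have hstep1 : ∀ m : N, ∃ c m₀, m = toL (R := R) s' c + t ^ (n + 1) • m₀ := by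
    intro m
    obtain ⟨c, hc⟩ := hs1 (g m)
    have : g (m - toL s' c) = 0 := by rw [map_sub, hcomp, hc, sub_self]
    obtain ⟨m₀, hm₀⟩ := hkerg _ this
    exact ⟨c, m₀, by rw [← hm₀]; abel⟩
  have hannN : ∀ m : N, t ^ (n + 1 + 1) • m = 0 := ann_of_equiv t eN
  have hs'1 : Surjective (toL (R := R) s') := by
    intro m
    obtain ⟨c₁, m₁, hm₁⟩ := hstep1 m
    obtain ⟨c₂, m₂, hm₂⟩ := hstep1 m₁
    refine ⟨c₁ + t ^ (n + 1) • c₂, ?_⟩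
    rw [map_add, map_smul, hm₁, hm₂, smul_add, smul_smul, ← pow_add]
    have : t ^ (n + 1 + (n + 1)) • m₂ = 0 := by
      have : (n + 1) + (n + 1) = n + (n + 1 + 1) := by omega
      rw [this, pow_add, mul_smul, hannN, smul_zero]
    rw [this, add_zero]
  refine ⟨s', hs', hs'1, ?_⟩
  -- kernel of toL s'
  have hker : ker (toL (R := R) s') ≤ ker (rho t r (n + 1)) := by
    apply ker_le_ker_of_surj (rho t r (n + 1)) (toL s') (rho_surjective t r (n + 1)) hs'1 ?_ eN
    intro c hc
    rw [LinearMap.mem_ker] at hc ⊢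
    exact toL_zero_of_mem t eN s' c ((mem_ker_rho t).mp hc)
  intro c hc
  exact (mem_ker_rho t).mp (hker (LinearMap.mem_ker.mpr hc))


lemma exists_seq (r : ℕ) (M : ℕ → Type*) [∀ n, AddCommGroup (M n)] [∀ n, Module R (M n)]
    (f : ∀ n, M (n + 1) →ₗ[R] M n) (hsurj : ∀ n, Surjective (f n))
    (e : ∀ n, M n ≃ₗ[R] (Fin r → R ⧸ Ideal.span {t ^ (n + 1)})) :
    ∃ S : ∀ n, Fin r → M n,
      (∀ n i, f n (S (n + 1) i) = S n i) ∧
      (∀ n, Surjective (toL (R := R) (S n))) ∧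
      (∀ n c, toL (R := R) (S n) c = 0 → ∀ i, c i ∈ Ideal.span {t ^ (n + 1)}) := by
  let T : ∀ n, {s : Fin r → M n // Surjective (toL (R := R) s) ∧
      ∀ c, toL (R := R) s c = 0 → ∀ i, c i ∈ Ideal.span {t ^ (n + 1)}} := fun n =>
    Nat.rec
      ⟨(good_base t (e 0)).choose, (good_base t (e 0)).choose_spec⟩
      (fun n p =>
        ⟨(good_step t (e n) (e (n + 1)) (f n) (hsurj n) p.1 p.2.1 p.2.2).choose,
         (good_step t (e n) (e (n + 1)) (f n) (hsurj n) p.1 p.2.1 p.2.2).choose_spec.2.1,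
         (good_step t (e n) (e (n + 1)) (f n) (hsurj n) p.1 p.2.1 p.2.2).choose_spec.2.2⟩) n
  refine ⟨fun n => (T n).1, fun n i => ?_, fun n => (T n).2.1, fun n => (T n).2.2⟩
  exact (good_step t (e n) (e (n + 1)) (f n) (hsurj n) (T n).1 (T n).2.1
    (T n).2.2).choose_spec.1 i

end Main

/-- Let `(M_n)` be an inverse system of `R`-modules with surjective transition maps,
where each `M_n` is free of rank `r` over `R/(t^{n+1})` (with module structure induced
from `R`).  If `R` is `t`-adically complete, then the inverse limit is a free
`R`-module of rank `r`. -/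
theorem stmt2 {R : Type*} [CommRing R] (t : R)
    [IsAdicComplete (Ideal.span {t}) R]
    (M : ℕ → Type*) [∀ n, AddCommGroup (M n)] [∀ n, Module R (M n)]
    (f : ∀ n, M (n + 1) →ₗ[R] M n)
    (hsurj : ∀ n, Function.Surjective (f n))
    (r : ℕ)
    (hfree : ∀ n, Nonempty (M n ≃ₗ[R] (Fin r → R ⧸ Ideal.span {t ^ (n + 1)}))) :
    Nonempty ((invLimit M f) ≃ₗ[R] (Fin r → R)) := by
  let e : ∀ n, M n ≃ₗ[R] (Fin r → R ⧸ Ideal.span {t ^ (n + 1)}) := fun n => (hfree n).some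
  obtain ⟨S, hScompat, hSsurj, hSker⟩ := exists_seq t r M f hsurj e
  set I : Ideal R := Ideal.span {t} with hI
  have hIpow : ∀ n : ℕ, (I ^ (n + 1) • ⊤ : Submodule R R) = Ideal.span {t ^ (n + 1)} := by
    intro n
    rw [smul_eq_mul, Ideal.mul_top, hI, Ideal.span_singleton_pow]
  have hmem : ∀ c : Fin r → R, (fun n => toL (R := R) (S n) c) ∈ invLimit M f := by
    intro c n
    show f n (toL (S (n + 1)) c) = toL (S n) c
    rw [map_toL, show (fun i => f n (S (n + 1) i)) = S n from funext (hScompat n)]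
  let Φ : (Fin r → R) →ₗ[R] invLimit M f :=
    (LinearMap.pi fun n => toL (R := R) (S n)).codRestrict _ hmem
  have hΦ : ∀ (c : Fin r → R) (n : ℕ), ((Φ c : ∀ n, M n)) n = toL (R := R) (S n) c :=
    fun c n => rfl
  have hinj : Injective Φ := by
    intro c d hcd
    have h0 : ∀ n, toL (R := R) (S n) (c - d) = 0 := by
      intro n
      rw [map_sub]
      have h1 : toL (R := R) (S n) c = toL (R := R) (S n) d := by
        have := congrFun (congrArg Subtype.val hcd) n
        rwa [hΦ, hΦ] at this
      rw [h1, sub_self]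
    have hmemk : ∀ n i, c i - d i ∈ Ideal.span {t ^ (n + 1)} := fun n =>
      hSker n (c - d) (h0 n)
    funext i
    have : c i - d i = 0 := by
      refine IsHausdorff.haus (inferInstance : IsHausdorff I R) (c i - d i) fun n => ?_
      rw [SModEq.zero]
      cases n with
      | zero =>
        rw [pow_zero, Ideal.one_eq_top, smul_eq_mul, Ideal.top_mul]
        exact Submodule.mem_top
      | succ m =>
        rw [hIpow m]
        exact hmemk m i
    exact sub_eq_zero.mp this
  have hsurjΦ : Surjective Φ := by
    intro x
    have hx : ∀ n, f n (x.1 (n + 1)) = x.1 n := x.2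
    choose c hc using fun n => hSsurj n (x.1 n)
    have hdiff : ∀ n i, c (n + 1) i - c n i ∈ Ideal.span {t ^ (n + 1)} := by
      intro n
      apply hSker n
      have h1 : toL (R := R) (S n) (c (n + 1)) = x.1 n := by
        rw [← hx n, ← hc (n + 1), map_toL,
          show (fun i => f n (S (n + 1) i)) = S n from funext (hScompat n)]
      show toL (R := R) (S n) (c (n + 1) - c n) = 0
      rw [map_sub, h1, hc, sub_self]
    have cauchy : ∀ i : Fin r, ∀ {m n : ℕ}, m ≤ n →
        c m i ≡ c n i [SMOD (I ^ m • ⊤ : Submodule R R)] := by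
      intro i m n hmn
      induction n with
      | zero =>
        obtain rfl : m = 0 := Nat.le_zero.mp hmn
        rfl
      | succ k ih =>
        rcases Nat.lt_or_ge m (k + 1) with h | h
        · refine (ih (by omega)).trans ?_
          rw [SModEq.sub_mem]
          have hle : Ideal.span {t ^ (k + 1)} ≤ (I ^ m • ⊤ : Submodule R R) := by
            rw [smul_eq_mul, Ideal.mul_top, ← Ideal.span_singleton_pow, ← hI]
            exact Ideal.pow_le_pow_right (by omega)
          have := hle (hdiff k i)
          simpa using Submodule.neg_mem _ this
        · obtain rfl : m = k + 1 := by omega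
          rfl
    choose L hL using fun i => IsPrecomplete.prec
      (inferInstance : IsPrecomplete I R) (fun {m n} h => cauchy i h)
    have hLc : ∀ n i, L i - c n i ∈ Ideal.span {t ^ (n + 1)} := by
      intro n i
      have h1 : c (n + 1) i - L i ∈ Ideal.span {t ^ (n + 1)} := by
        have := (SModEq.sub_mem).mp (hL i (n + 1))
        rwa [hIpow n] at this
      have h2 := hdiff n i
      have : L i - c n i = (c (n + 1) i - c n i) - (c (n + 1) i - L i) := by ring
      rw [this]
      exact Submodule.sub_mem _ h2 h1
    refine ⟨L, Subtype.ext (funext fun n => ?_)⟩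
    rw [hΦ]
    have h0 : toL (R := R) (S n) (L - c n) = 0 :=
      toL_zero_of_mem t (e n) _ _ (fun i => hLc n i)
    rw [map_sub, hc] at h0
    have := sub_eq_zero.mp h0
    rw [this]
  exact ⟨(LinearEquiv.ofBijective Φ ⟨hinj, hsurjΦ⟩).symm⟩
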